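/- Let f : [-1,1] → ℝ be of r-H_f-Hölder type on [−1,1], i.e. |f(x) − f(y)| ≤ H_f·|x − y|^r for all x, y ∈ [−1,1], where r > 0 and H_f > 0 are given. Then |∫_{-1}^{1} f(t) dt − f(−√3/3) − f(√3/3)| ≤ (H_f/(r+1))·[((3−√3)/3)^{r+1} + ((3+√3)/3)^{r+1}]. -/

import Mathlib

/-!
Replacing `f` by the constant `f c` on `[a, b]` costs at most `H ∫ₐᵇ |t - c|^r`, which is
`H ((c - a)^(r+1) + (b - c)^(r+1)) / (r + 1)`. The two-point Gauss–Legendre rule is the average of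
the one-point rules `2 f(-√3/3)` and `2 f(√3/3)`, and by symmetry of the nodes both bounds equal
the right-hand side.
-/

open MeasureTheory intervalIntegral Set Filter Topology

theorem continuousOn_of_dist_le_mul_rpow {α β : Type*} [PseudoMetricSpace α]
    [PseudoMetricSpace β] {f : α → β} {s : Set α} {r H : ℝ} (hr : 0 < r)
    (hf : ∀ x ∈ s, ∀ y ∈ s, dist (f x) (f y) ≤ H * dist x y ^ r) : ContinuousOn f s := by
  intro x hx
  have hbound : Tendsto (fun y => H * dist y x ^ r) (𝓝[s] x) (𝓝 0) := by
    have : Continuous fun y => H * dist y x ^ r :=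
      continuous_const.mul ((continuous_id.dist continuous_const).rpow_const fun _ => Or.inr hr.le)
    simpa [Real.zero_rpow hr.ne'] using (this.tendsto x).mono_left nhdsWithin_le_nhds
  exact tendsto_iff_dist_tendsto_zero.2 <| squeeze_zero' (Eventually.of_forall fun _ => dist_nonneg)
    (eventually_nhdsWithin_of_forall fun y hy => hf y hy x hx) hbound

theorem integral_abs_sub_rpow {a b c r : ℝ} (hc : c ∈ Icc a b) (hr : 0 ≤ r) :
    ∫ t in a..b, |t - c| ^ r = ((c - a) ^ (r + 1) + (b - c) ^ (r + 1)) / (r + 1) := by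
  have hcont : Continuous fun t : ℝ => |t - c| ^ r :=
    (continuous_id.sub continuous_const).abs.rpow_const fun _ => Or.inr hr
  have hzero : (0 : ℝ) ^ (r + 1) = 0 := Real.zero_rpow (by linarith)
  have left : ∫ t in a..c, |t - c| ^ r = (c - a) ^ (r + 1) / (r + 1) := by
    calc ∫ t in a..c, |t - c| ^ r = ∫ t in a..c, (c - t) ^ r :=
          integral_congr fun t ht => by
            rw [uIcc_of_le hc.1] at ht
            simp only [abs_sub_comm t c, abs_of_nonneg (sub_nonneg.2 ht.2)]
      _ = (c - a) ^ (r + 1) / (r + 1) := by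
          rw [integral_comp_sub_left (· ^ r), integral_rpow (Or.inl (by linarith)), sub_self,
            hzero, sub_zero]
  have right : ∫ t in c..b, |t - c| ^ r = (b - c) ^ (r + 1) / (r + 1) := by
    calc ∫ t in c..b, |t - c| ^ r = ∫ t in c..b, (t - c) ^ r :=
          integral_congr fun t ht => by
            rw [uIcc_of_le hc.2] at ht
            simp only [abs_of_nonneg (sub_nonneg.2 ht.1)]
      _ = (b - c) ^ (r + 1) / (r + 1) := by
          rw [integral_comp_sub_right (· ^ r), integral_rpow (Or.inl (by linarith)), sub_self,
            hzero, sub_zero]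
  rw [← integral_add_adjacent_intervals (hcont.intervalIntegrable a c)
    (hcont.intervalIntegrable c b), left, right, add_div]

theorem abs_integral_sub_mul_le_of_holder {f : ℝ → ℝ} {a b c r H : ℝ} (hab : a ≤ b)
    (hc : c ∈ Icc a b) (hr : 0 < r)
    (hf : ∀ x ∈ Icc a b, ∀ y ∈ Icc a b, |f x - f y| ≤ H * |x - y| ^ r) :
    |(∫ t in a..b, f t) - (b - a) * f c|
      ≤ H / (r + 1) * ((c - a) ^ (r + 1) + (b - c) ^ (r + 1)) := by
  have hfc : ContinuousOn f (Icc a b) :=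
    continuousOn_of_dist_le_mul_rpow hr fun x hx y hy => by
      simpa only [Real.dist_eq] using hf x hx y hy
  have hdiff : (∫ t in a..b, f t) - (b - a) * f c = ∫ t in a..b, (f t - f c) := by
    rw [integral_sub (hfc.intervalIntegrable_of_Icc hab) intervalIntegrable_const,
      intervalIntegral.integral_const, smul_eq_mul]
  have hbound : IntervalIntegrable (fun t => H * |t - c| ^ r) volume a b :=
    (continuous_const.mul ((continuous_id.sub continuous_const).abs.rpow_const
      fun _ => Or.inr hr.le)).intervalIntegrable a b
  calc |(∫ t in a..b, f t) - (b - a) * f c| ≤ ∫ t in a..b, H * |t - c| ^ r := by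
        rw [hdiff, ← Real.norm_eq_abs]
        exact norm_integral_le_of_norm_le hab (Eventually.of_forall fun t ht =>
          hf t (Ioc_subset_Icc_self ht) c hc) hbound
    _ = H / (r + 1) * ((c - a) ^ (r + 1) + (b - c) ^ (r + 1)) := by
        rw [intervalIntegral.integral_const_mul, integral_abs_sub_rpow hc hr.le, mul_div_assoc']
        ring

theorem two_point_GL_holder_riemann_sharp_general (f : ℝ → ℝ) (r Hf : ℝ)
    (hr : 0 < r)
    (hf : ∀ x ∈ Set.Icc (-1 : ℝ) 1, ∀ y ∈ Set.Icc (-1 : ℝ) 1,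
      |f x - f y| ≤ Hf * |x - y| ^ r) :
    |(∫ t in (-1 : ℝ)..1, f t) - f (-(Real.sqrt 3) / 3) - f (Real.sqrt 3 / 3)|
      ≤ (Hf / (r + 1))
        * (((3 - Real.sqrt 3) / 3) ^ (r + 1) + ((3 + Real.sqrt 3) / 3) ^ (r + 1)) := by
  set s := Real.sqrt 3
  have hs : s ≤ 3 := Real.sqrt_le_iff.2 ⟨by norm_num, by norm_num⟩
  have hs₀ : 0 ≤ s := Real.sqrt_nonneg 3
  have hneg := abs_integral_sub_mul_le_of_holder (by norm_num)
    (⟨by linarith, by linarith⟩ : -s / 3 ∈ Icc (-1 : ℝ) 1) hr hf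
  have hpos := abs_integral_sub_mul_le_of_holder (by norm_num)
    (⟨by linarith, by linarith⟩ : s / 3 ∈ Icc (-1 : ℝ) 1) hr hf
  have hsum := abs_add_le ((∫ t in (-1 : ℝ)..1, f t) - (1 - -1) * f (-s / 3))
    ((∫ t in (-1 : ℝ)..1, f t) - (1 - -1) * f (s / 3))
  rw [show (∫ t in (-1 : ℝ)..1, f t) - (1 - -1) * f (-s / 3)
      + ((∫ t in (-1 : ℝ)..1, f t) - (1 - -1) * f (s / 3))
      = 2 * ((∫ t in (-1 : ℝ)..1, f t) - f (-s / 3) - f (s / 3)) by ring,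
    abs_mul, abs_two] at hsum
  rw [show -s / 3 - -1 = (3 - s) / 3 by ring, show 1 - -s / 3 = (3 + s) / 3 by ring] at hneg
  rw [show s / 3 - -1 = (3 + s) / 3 by ring, show 1 - s / 3 = (3 - s) / 3 by ring] at hpos
  linarith

/-- If `f` is of `r`-`H_f`-Hölder type on `[-1,1]`, then
`|∫_{-1}^1 f(t) dt - f(-√3/3) - f(√3/3)|
  ≤ (H_f/(r+1)) · [((3-√3)/3)^(r+1) + ((3+√3)/3)^(r+1)]`. -/
theorem two_point_GL_holder_riemann_sharp (f : ℝ → ℝ) (r Hf : ℝ)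
    (hr : 0 < r) (hHf : 0 < Hf)
    (hf : ∀ x ∈ Set.Icc (-1 : ℝ) 1, ∀ y ∈ Set.Icc (-1 : ℝ) 1,
      |f x - f y| ≤ Hf * |x - y| ^ r) :
    |(∫ t in (-1 : ℝ)..1, f t) - f (-(Real.sqrt 3) / 3) - f (Real.sqrt 3 / 3)|
      ≤ (Hf / (r + 1))
        * (((3 - Real.sqrt 3) / 3) ^ (r + 1) + ((3 + Real.sqrt 3) / 3) ^ (r + 1)) :=
  two_point_GL_holder_riemann_sharp_general f r Hf hr hf
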